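/- Let ν be a Lévy measure with μ₂ = ∫_{0<|z|≤1} z² ν(dz), let n be a positive integer and h = 1/n. Then for every smooth compactly supported φ : ℝ → ℝ, ‖J_1^hφ‖_{L²} ≤ (μ₂/2) · ‖φ″‖_{L²}. -/

import Mathlib

open MeasureTheory

/-- The grid cell `B_k^h`: for `k ≥ 1` it is `((k−1)h, kh]`, for `k ≤ −1` it is `[kh, (k+1)h)`. -/
noncomputable def levyCell (h : ℝ) (k : ℤ) : Set ℝ :=
  if 0 < k then Set.Ioc (((k : ℝ) - 1) * h) ((k : ℝ) * h)
  else Set.Ico ((k : ℝ) * h) (((k : ℝ) + 1) * h)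

/-- `ζ_k^h = ∫_{B_k^h} z² ν(dz)`. -/
noncomputable def zetah (ν : Measure ℝ) (h : ℝ) (k : ℤ) : ℝ := ∫ z in levyCell h k, z ^ 2 ∂ν

/-- `θ_k^l = ∫_{l/|k|}^{(l+1)/|k|} (1−θ) dθ`. -/
noncomputable def thetaW (k : ℤ) (l : ℕ) : ℝ :=
  ∫ θ in ((l : ℝ) / (k.natAbs : ℝ))..(((l : ℝ) + 1) / (k.natAbs : ℝ)), (1 - θ)

/-- `s_k = k/|k|`. -/
noncomputable def sgn (k : ℤ) : ℝ := if 0 < k then 1 else -1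

/-- `δ_{−h}δ_hφ(x) = (φ(x+h) − 2φ(x) + φ(x−h))/h²`. -/
noncomputable def secondDiff (h : ℝ) (φ : ℝ → ℝ) (x : ℝ) : ℝ :=
  (φ (x + h) - 2 * φ x + φ (x - h)) / h ^ 2

/-- `J_1^hφ(x)`, with `h = 1/n`. -/
noncomputable def J1h (ν : Measure ℝ) (n : ℕ) (φ : ℝ → ℝ) (x : ℝ) : ℝ :=
  ∑ k ∈ (Finset.Icc (-(n : ℤ)) (n : ℤ)).erase 0, zetah ν (1 / n) k *
    ∑ l ∈ Finset.range k.natAbs,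
      thetaW k l * secondDiff (1 / n) φ (x + sgn k * (l : ℝ) * (1 / n))

/-- The `L²` norm `‖f‖_{L²} = (∫ f²)^{1/2}`. -/
noncomputable def L2norm (f : ℝ → ℝ) : ℝ := Real.sqrt (∫ x, f x ^ 2)

lemma cs_integral (f g : ℝ → ℝ) (hf : Integrable (fun x => f x ^ 2))
    (hg : Integrable (fun x => g x ^ 2)) (hfg : Integrable (fun x => f x * g x)) :
    ∫ x, f x * g x ≤ Real.sqrt (∫ x, f x ^ 2) * Real.sqrt (∫ x, g x ^ 2) := by
  set A := ∫ x, f x ^ 2 with hA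
  set B := ∫ x, g x ^ 2 with hB
  set C := ∫ x, f x * g x with hC
  have hA0 : 0 ≤ A := integral_nonneg fun x => sq_nonneg _
  have hB0 : 0 ≤ B := integral_nonneg fun x => sq_nonneg _
  have key : ∀ l : ℝ, 0 ≤ A - 2 * l * C + l ^ 2 * B := by
    intro l
    have h0 : 0 ≤ ∫ x, (f x - l * g x) ^ 2 := integral_nonneg fun x => sq_nonneg _
    have he : ∀ x, (f x - l * g x) ^ 2
        = f x ^ 2 - 2 * l * (f x * g x) + l ^ 2 * g x ^ 2 := by intro x; ring
    have i1 : Integrable (fun x => f x ^ 2 - 2 * l * (f x * g x)) := by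
      exact hf.sub (hfg.const_mul _)
    have i2 : Integrable (fun x => l ^ 2 * g x ^ 2) := by exact hg.const_mul _
    rw [integral_congr_ae (Filter.Eventually.of_forall he)] at h0
    rw [integral_add i1 i2, integral_sub hf (hfg.const_mul _), integral_const_mul _ _,
      integral_const_mul _ _] at h0
    linarith
  rcases eq_or_lt_of_le hB0 with hB1 | hB1
  · have hC0 : C ≤ 0 := by
      by_contra hc
      push_neg at hc
      have hk := key ((A + 1) / (2 * C))
      rw [← hB1] at hk
      have he2 : 2 * ((A + 1) / (2 * C)) * C = A + 1 := by
        field_simp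
      rw [mul_zero] at hk
      nlinarith
    calc C ≤ 0 := hC0
      _ ≤ _ := mul_nonneg (Real.sqrt_nonneg _) (Real.sqrt_nonneg _)
  · have hk := key (C / B)
    have he2 : A - 2 * (C / B) * C + (C / B) ^ 2 * B = A - C ^ 2 / B := by
      field_simp
      ring
    rw [he2] at hk
    have hCB : C ^ 2 ≤ A * B := (div_le_iff₀ hB1).mp (by linarith)
    calc C ≤ |C| := le_abs_self _
      _ = Real.sqrt (C ^ 2) := (Real.sqrt_sq_eq_abs _).symm
      _ ≤ Real.sqrt (A * B) := Real.sqrt_le_sqrt hCB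
      _ = _ := Real.sqrt_mul hA0 _

lemma L2norm_nonneg (f : ℝ → ℝ) : 0 ≤ L2norm f := Real.sqrt_nonneg _

lemma L2norm_add_le (f g : ℝ → ℝ) (hf : Integrable (fun x => f x ^ 2))
    (hg : Integrable (fun x => g x ^ 2)) (hfg : Integrable (fun x => f x * g x)) :
    L2norm (fun x => f x + g x) ≤ L2norm f + L2norm g := by
  have hcs := cs_integral f g hf hg hfg
  have he : ∀ x, (f x + g x) ^ 2 = f x ^ 2 + 2 * (f x * g x) + g x ^ 2 := by intro x; ring
  have i1 : Integrable (fun x => f x ^ 2 + 2 * (f x * g x)) := by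
    exact hf.add (hfg.const_mul _)
  unfold L2norm
  rw [integral_congr_ae (Filter.Eventually.of_forall he),
    integral_add i1 hg, integral_add hf (hfg.const_mul 2),
    integral_const_mul _ _]
  have h1 : (∫ x, f x ^ 2) + 2 * (∫ x, f x * g x) + ∫ x, g x ^ 2
      ≤ (Real.sqrt (∫ x, f x ^ 2) + Real.sqrt (∫ x, g x ^ 2)) ^ 2 := by
    have e1 : Real.sqrt (∫ x, f x ^ 2) ^ 2 = ∫ x, f x ^ 2 :=
      Real.sq_sqrt (integral_nonneg fun x => sq_nonneg _)
    have e2 : Real.sqrt (∫ x, g x ^ 2) ^ 2 = ∫ x, g x ^ 2 :=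
      Real.sq_sqrt (integral_nonneg fun x => sq_nonneg _)
    nlinarith
  calc Real.sqrt ((∫ x, f x ^ 2) + 2 * (∫ x, f x * g x) + ∫ x, g x ^ 2)
      ≤ Real.sqrt ((Real.sqrt (∫ x, f x ^ 2) + Real.sqrt (∫ x, g x ^ 2)) ^ 2) :=
        Real.sqrt_le_sqrt h1
    _ = _ := by
        rw [Real.sqrt_sq (by positivity)]

/-- Continuous with compact support. -/
def CCS (f : ℝ → ℝ) : Prop := Continuous f ∧ HasCompactSupport f

lemma CCS.sq_integrable {f : ℝ → ℝ} (hf : CCS f) : Integrable (fun x => f x ^ 2) := by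
  have hc : Continuous (fun x => f x ^ 2) := hf.1.pow 2
  have hs : HasCompactSupport (fun x => f x ^ 2) := by
    apply hf.2.mono
    intro x hx
    simp only [Function.mem_support] at hx ⊢
    intro h0; exact hx (by rw [h0]; ring)
  exact hc.integrable_of_hasCompactSupport hs

lemma CCS.mul_integrable {f g : ℝ → ℝ} (hf : CCS f) (hg : Continuous g) :
    Integrable (fun x => f x * g x) := by
  have hc : Continuous (fun x => f x * g x) := hf.1.mul hg
  have hs : HasCompactSupport (fun x => f x * g x) := by
    apply hf.2.mono
    intro x hx
    simp only [Function.mem_support] at hx ⊢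
    intro h0; exact hx (by rw [h0]; ring)
  exact hc.integrable_of_hasCompactSupport hs

lemma CCS.add {f g : ℝ → ℝ} (hf : CCS f) (hg : CCS g) : CCS (fun x => f x + g x) := by
  exact ⟨hf.1.add hg.1, hf.2.add hg.2⟩

lemma CCS.const_mul {f : ℝ → ℝ} (hf : CCS f) (a : ℝ) : CCS (fun x => a * f x) := by
  refine ⟨continuous_const.mul hf.1, ?_⟩
  apply hf.2.mono
  intro x hx
  simp only [Function.mem_support] at hx ⊢
  intro h0; exact hx (by rw [h0]; ring)

lemma CCS.translate {f : ℝ → ℝ} (hf : CCS f) (c : ℝ) : CCS (fun x => f (x + c)) :=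
  ⟨hf.1.comp (continuous_id.add continuous_const),
    hf.2.comp_homeomorph (Homeomorph.addRight c)⟩

lemma CCS.sum {ι : Type*} (s : Finset ι) (F : ι → ℝ → ℝ) (hF : ∀ i ∈ s, CCS (F i)) :
    CCS (fun x => ∑ i ∈ s, F i x) := by
  classical
  induction s using Finset.cons_induction with
  | empty => simpa using ⟨continuous_const, HasCompactSupport.zero (α := ℝ) (β := ℝ)⟩
  | cons a t ha ih =>
    simp only [Finset.sum_cons]
    exact (hF a (Finset.mem_cons_self a t)).add
      (ih fun i hi => hF i (Finset.mem_cons_of_mem hi))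

lemma L2norm_sum_le {ι : Type*} (s : Finset ι) (F : ι → ℝ → ℝ) (hF : ∀ i ∈ s, CCS (F i)) :
    L2norm (fun x => ∑ i ∈ s, F i x) ≤ ∑ i ∈ s, L2norm (F i) := by
  classical
  induction s using Finset.cons_induction with
  | empty => simp [L2norm]
  | cons a t ha ih =>
    simp only [Finset.sum_cons]
    have h1 := hF a (Finset.mem_cons_self a t)
    have h2 := CCS.sum t F (fun i hi => hF i (Finset.mem_cons_of_mem hi))
    calc L2norm (fun x => F a x + ∑ i ∈ t, F i x)
        ≤ L2norm (F a) + L2norm (fun x => ∑ i ∈ t, F i x) :=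
          L2norm_add_le _ _ h1.sq_integrable h2.sq_integrable (h1.mul_integrable h2.1)
      _ ≤ L2norm (F a) + ∑ i ∈ t, L2norm (F i) := by
          gcongr
          exact ih fun i hi => hF i (Finset.mem_cons_of_mem hi)

lemma L2norm_const_mul (a : ℝ) (f : ℝ → ℝ) :
    L2norm (fun x => a * f x) = |a| * L2norm f := by
  unfold L2norm
  have : ∀ x, (a * f x) ^ 2 = a ^ 2 * f x ^ 2 := fun x => by ring
  rw [integral_congr_ae (Filter.Eventually.of_forall this), integral_const_mul _ _,
    Real.sqrt_mul (sq_nonneg a), Real.sqrt_sq_eq_abs]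

lemma L2norm_translate (f : ℝ → ℝ) (c : ℝ) :
    L2norm (fun x => f (x + c)) = L2norm f := by
  unfold L2norm
  rw [integral_add_right_eq_self (fun x => f x ^ 2) c]

/-- The triangular weight. -/
noncomputable def triW (t : ℝ) : ℝ := max (1 - |t|) 0

lemma triW_nonneg (t : ℝ) : 0 ≤ triW t := le_max_right _ _

lemma triW_continuous : Continuous triW :=
  (continuous_const.sub continuous_abs).max continuous_const

lemma triW_support (t : ℝ) (ht : t ∉ Set.Icc (-1 : ℝ) 1) : triW t = 0 := by
  have : 1 < |t| := by
    rcases not_and_or.mp ht with h | h <;> [skip; skip] <;>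
    · simp only [Set.mem_Icc, not_and_or, not_le] at ht
      rcases ht with h | h
      · exact lt_of_lt_of_le (by linarith) (neg_le_abs t)
      · exact lt_of_lt_of_le h (le_abs_self t)
  simp [triW, max_eq_right, sub_nonpos.mpr this.le]

lemma triW_hasCompactSupport : HasCompactSupport triW := by
  apply HasCompactSupport.intro isCompact_Icc triW_support

lemma triW_even (t : ℝ) : triW (-t) = triW t := by simp [triW]

lemma triW_eq_on_Icc (t : ℝ) (ht : t ∈ Set.Icc (0 : ℝ) 1) : triW t = 1 - t := by
  rw [triW, abs_of_nonneg ht.1, max_eq_left (by linarith [ht.2])]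

lemma triW_integral : (∫ t, triW t) = 1 := by
  rw [← setIntegral_eq_integral_of_forall_compl_eq_zero triW_support,
    integral_Icc_eq_integral_Ioc, ← intervalIntegral.integral_of_le (by norm_num : (-1:ℝ) ≤ 1)]
  have hsplit := intervalIntegral.integral_add_adjacent_intervals
    (a := (-1:ℝ)) (b := 0) (c := 1)
    (triW_continuous.intervalIntegrable (μ := volume) _ _) (triW_continuous.intervalIntegrable (μ := volume) _ _)
  rw [← hsplit]
  have h1 : (∫ t in (0:ℝ)..1, triW t) = ∫ t in (0:ℝ)..1, (1 - t) := by
    apply intervalIntegral.integral_congr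
    intro t ht
    rw [Set.uIcc_of_le (by norm_num : (0:ℝ) ≤ 1)] at ht
    exact triW_eq_on_Icc t ht
  have h2 : (∫ t in (-1:ℝ)..0, triW t) = ∫ t in (0:ℝ)..1, (1 - t) := by
    have := intervalIntegral.integral_comp_neg (a := (0:ℝ)) (b := 1) (fun t => triW t)
    simp only [neg_zero, neg_neg] at this
    rw [← this]
    apply intervalIntegral.integral_congr
    intro t ht
    rw [Set.uIcc_of_le (by norm_num : (0:ℝ) ≤ 1)] at ht
    show triW (-t) = 1 - t
    rw [triW_even, triW_eq_on_Icc t ht]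
  rw [h1, h2]
  rw [intervalIntegral.integral_sub intervalIntegrable_const
    (intervalIntegral.intervalIntegrable_id), integral_id, intervalIntegral.integral_const]
  norm_num

lemma secondDiff_eq (h : ℝ) (hh : 0 < h) (φ : ℝ → ℝ) (hφ : ContDiff ℝ (⊤ : ℕ∞) φ) (x : ℝ) :
    secondDiff h φ x = ∫ t, triW t * iteratedDeriv 2 φ (x + t * h) := by
  have hS : ContDiff ℝ (⊤ : ℕ∞) φ := hφ.of_le (by simp)
  set f1 := deriv φ with hf1
  set f2 := deriv f1 with hf2
  have hit : iteratedDeriv 2 φ = f2 := by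
    rw [iteratedDeriv_succ, iteratedDeriv_one]
  have hS1 : ContDiff ℝ (⊤ : ℕ∞) f1 := (contDiff_infty_iff_deriv.mp hS).2
  have hder : ∀ y, HasDerivAt φ (f1 y) y := fun y =>
    ((hS.differentiable (by simp)) y).hasDerivAt
  have hder1 : ∀ y, HasDerivAt f1 (f2 y) y := fun y =>
    ((hS1.differentiable (by simp)) y).hasDerivAt
  have hc1 : Continuous f1 := hS1.continuous
  have hc2 : Continuous f2 := (contDiff_infty_iff_deriv.mp hS1).2.continuous
  -- derivative computations
  have hFder : ∀ (c : ℝ) (ε : ℝ), ε = 1 ∨ ε = -1 → ∀ s : ℝ,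
      HasDerivAt (fun s => ε * ((h - s) * f1 (c + ε * s)) + φ (c + ε * s))
        ((h - s) * f2 (c + ε * s)) s := by
    intro c ε hε s
    have hin : HasDerivAt (fun s : ℝ => c + ε * s) ε s := by
      simpa using (hasDerivAt_id s).const_mul ε |>.const_add c
    have hφs : HasDerivAt (fun s : ℝ => φ (c + ε * s)) (f1 (c + ε * s) * ε) s :=
      (hder (c + ε * s)).comp s hin
    have hf1s : HasDerivAt (fun s : ℝ => f1 (c + ε * s)) (f2 (c + ε * s) * ε) s :=
      HasDerivAt.comp (h₂ := f1) s (hder1 (c + ε * s)) hin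
    have hhs : HasDerivAt (fun s : ℝ => h - s) (-1) s := by
      simpa using (hasDerivAt_id s).const_sub h
    have := ((hhs.mul hf1s).const_mul ε).add hφs
    refine HasDerivAt.congr_deriv this ?_
    rcases hε with hε | hε <;> rw [hε] <;> ring
  have hA : (∫ s in (0:ℝ)..h, (h - s) * f2 (x + s))
      = φ (x + h) - φ x - h * f1 x := by
    have := intervalIntegral.integral_eq_sub_of_hasDerivAt
      (f := fun s => 1 * ((h - s) * f1 (x + 1 * s)) + φ (x + 1 * s))
      (f' := fun s => (h - s) * f2 (x + 1 * s)) (a := 0) (b := h)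
      (fun s _ => hFder x 1 (Or.inl rfl) s)
      (Continuous.intervalIntegrable ((continuous_const.sub continuous_id).mul (hc2.comp (by continuity))) _ _)
    simp only [one_mul] at this ⊢
    rw [this]
    ring
  have hB : (∫ s in (0:ℝ)..h, (h - s) * f2 (x - s))
      = φ (x - h) - φ x + h * f1 x := by
    have := intervalIntegral.integral_eq_sub_of_hasDerivAt
      (f := fun s => (-1) * ((h - s) * f1 (x + (-1) * s)) + φ (x + (-1) * s))
      (f' := fun s => (h - s) * f2 (x + (-1) * s)) (a := 0) (b := h)
      (fun s _ => hFder x (-1) (Or.inr rfl) s)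
      (Continuous.intervalIntegrable ((continuous_const.sub continuous_id).mul (hc2.comp (by continuity))) _ _)
    have he : ∀ s : ℝ, x + (-1) * s = x - s := fun s => by ring
    simp only [he] at this
    rw [this]
    simp only [sub_self, mul_zero, sub_zero, zero_mul, neg_mul, one_mul]
    ring
  -- rewrite the full-line integral
  have hTcc : ∀ t : ℝ, t ∉ Set.Icc (-1:ℝ) 1 → triW t * f2 (x + t * h) = 0 := by
    intro t ht; rw [triW_support t ht, zero_mul]
  have hchange : ∀ g : ℝ → ℝ, Continuous g →
      (∫ t in (0:ℝ)..1, (1 - t) * g (t * h)) = h⁻¹ * h⁻¹ * ∫ s in (0:ℝ)..h, (h - s) * g s := by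
    intro g hg
    have hcomp := intervalIntegral.integral_comp_mul_left
      (f := fun s => (h - s) * g s) (a := (0:ℝ)) (b := 1) (c := h) (ne_of_gt hh)
    simp only [mul_zero, mul_one] at hcomp
    have : (∫ t in (0:ℝ)..1, (1 - t) * g (t * h))
        = ∫ t in (0:ℝ)..1, h⁻¹ * ((h - h * t) * g (h * t)) := by
      apply intervalIntegral.integral_congr
      intro t _
      show (1 - t) * g (t * h) = h⁻¹ * ((h - h * t) * g (h * t))
      rw [mul_comm t h]
      field_simp
    rw [this, intervalIntegral.integral_const_mul, hcomp, smul_eq_mul]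
    ring
  rw [hit]
  rw [← setIntegral_eq_integral_of_forall_compl_eq_zero hTcc,
    integral_Icc_eq_integral_Ioc, ← intervalIntegral.integral_of_le (by norm_num : (-1:ℝ) ≤ 1)]
  have hcont : Continuous (fun t : ℝ => triW t * f2 (x + t * h)) :=
    triW_continuous.mul (hc2.comp (by continuity))
  have hsplit := intervalIntegral.integral_add_adjacent_intervals
    (a := (-1:ℝ)) (b := 0) (c := 1) (μ := volume) (f := fun t => triW t * f2 (x + t * h))
    (hcont.intervalIntegrable _ _) (hcont.intervalIntegrable _ _)
  rw [← hsplit]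
  have h1 : (∫ t in (0:ℝ)..1, triW t * f2 (x + t * h))
      = ∫ t in (0:ℝ)..1, (1 - t) * (fun s => f2 (x + s)) (t * h) := by
    apply intervalIntegral.integral_congr
    intro t ht
    rw [Set.uIcc_of_le (by norm_num : (0:ℝ) ≤ 1)] at ht
    show triW t * f2 (x + t * h) = (1 - t) * f2 (x + t * h)
    rw [triW_eq_on_Icc t ht]
  have h2 : (∫ t in (-1:ℝ)..0, triW t * f2 (x + t * h))
      = ∫ t in (0:ℝ)..1, (1 - t) * (fun s => f2 (x - s)) (t * h) := by
    have hneg := intervalIntegral.integral_comp_neg (a := (0:ℝ)) (b := 1)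
      (fun t => triW t * f2 (x + t * h))
    simp only [neg_zero, neg_neg] at hneg
    rw [← hneg]
    apply intervalIntegral.integral_congr
    intro t ht
    rw [Set.uIcc_of_le (by norm_num : (0:ℝ) ≤ 1)] at ht
    show triW (-t) * f2 (x + -t * h) = (1 - t) * f2 (x - t * h)
    rw [triW_even, triW_eq_on_Icc t ht]
    ring_nf
  rw [h1, h2, hchange (fun s => f2 (x + s)) (hc2.comp (by continuity)),
    hchange (fun s => f2 (x - s)) (hc2.comp (by continuity)), hA, hB]
  unfold secondDiff
  field_simp
  ring

lemma iteratedDeriv_two_CCS (φ : ℝ → ℝ) (hφ : ContDiff ℝ (⊤ : ℕ∞) φ) (hφc : HasCompactSupport φ) :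
    CCS (iteratedDeriv 2 φ) := by
  rw [iteratedDeriv_succ, iteratedDeriv_one]
  have hS : ContDiff ℝ (⊤ : ℕ∞) φ := hφ.of_le (by simp)
  have h1 : ContDiff ℝ (⊤ : ℕ∞) (deriv φ) := (contDiff_infty_iff_deriv.mp hS).2
  exact ⟨(contDiff_infty_iff_deriv.mp h1).2.continuous, hφc.deriv.deriv⟩

lemma secondDiff_CCS (h : ℝ) (hh : 0 < h) (φ : ℝ → ℝ) (hφcont : Continuous φ)
    (hφc : HasCompactSupport φ) : CCS (secondDiff h φ) := by
  have he : secondDiff h φ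
      = fun x => (1 / h ^ 2) * (φ (x + h) + ((-2) * φ x + φ (x + -h))) := by
    funext x
    show (φ (x + h) - 2 * φ x + φ (x - h)) / h ^ 2 = _
    rw [sub_eq_add_neg x h]
    field_simp
    ring
  rw [he]
  have hccs : CCS φ := ⟨hφcont, hφc⟩
  exact (((hccs.translate h).add ((hccs.const_mul (-2)).add (hccs.translate (-h)))).const_mul _)

lemma L2norm_secondDiff_le (h : ℝ) (hh : 0 < h) (φ : ℝ → ℝ) (hφ : ContDiff ℝ (⊤ : ℕ∞) φ)
    (hφc : HasCompactSupport φ) :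
    L2norm (secondDiff h φ) ≤ L2norm (iteratedDeriv 2 φ) := by
  have hf2 := iteratedDeriv_two_CCS φ hφ hφc
  set f2 := iteratedDeriv 2 φ with hf2def
  set C := ∫ x, f2 x ^ 2 with hCdef
  have hC0 : 0 ≤ C := integral_nonneg fun x => sq_nonneg _
  -- the dominating kernel
  set F : ℝ → ℝ → ℝ := fun x t => triW t * f2 (x + t * h) ^ 2 with hFdef
  have hFcont : Continuous (Function.uncurry F) := by
    apply Continuous.mul (triW_continuous.comp continuous_snd)
    exact (hf2.1.comp (continuous_fst.add (continuous_snd.mul continuous_const))).pow 2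
  have hFcs : HasCompactSupport (Function.uncurry F) := by
    obtain ⟨R, hR⟩ := hf2.2.isBounded.subset_closedBall 0
    apply HasCompactSupport.intro
      (IsCompact.prod (isCompact_closedBall (0:ℝ) (R + |h|)) (isCompact_Icc (a := (-1:ℝ)) (b := 1)))
    rintro ⟨x, t⟩ hp
    simp only [Set.mem_prod, not_and_or] at hp
    show triW t * f2 (x + t * h) ^ 2 = 0
    rcases hp with hp | hp
    · by_contra hne
      have hne2 : f2 (x + t * h) ≠ 0 := fun h0 => hne (by rw [h0]; ring)
      have hne1 : triW t ≠ 0 := fun h0 => hne (by rw [h0]; ring)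
      have htI : t ∈ Set.Icc (-1:ℝ) 1 := by
        by_contra hti; exact hne1 (triW_support t hti)
      have hmem : x + t * h ∈ Metric.closedBall (0:ℝ) R :=
        hR (subset_tsupport _ (Function.mem_support.mpr hne2))
      rw [mem_closedBall_zero_iff, Real.norm_eq_abs] at hmem
      apply hp
      rw [mem_closedBall_zero_iff, Real.norm_eq_abs]
      have habs : |t| ≤ 1 := abs_le.mpr ⟨htI.1, htI.2⟩
      have : |x| ≤ |x + t * h| + |t * h| := by
        have := abs_sub_abs_le_abs_sub x (-(t*h))
        simp only [abs_neg, sub_neg_eq_add] at this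
        linarith
      have h2 : |t * h| ≤ |h| := by
        rw [abs_mul]
        nlinarith [abs_nonneg h]
      linarith
    · rw [triW_support t hp, zero_mul]
  have hFint : Integrable (Function.uncurry F) (volume.prod volume) :=
    hFcont.integrable_of_hasCompactSupport hFcs
  have hswap : (∫ x, ∫ t, F x t) = ∫ t, ∫ x, F x t :=
    integral_integral_swap_of_hasCompactSupport hFcont hFcs
  have hmarg : Integrable (fun x => ∫ t, F x t) := hFint.integral_prod_left
  -- pointwise bound
  have hpt : ∀ x, (secondDiff h φ x) ^ 2 ≤ ∫ t, F x t := by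
    intro x
    rw [secondDiff_eq h hh φ hφ x]
    set u : ℝ → ℝ := fun t => f2 (x + t * h) with hudef
    have hu_cont : Continuous u := hf2.1.comp (by continuity)
    have htw : CCS triW := ⟨triW_continuous, triW_hasCompactSupport⟩
    set sw : ℝ → ℝ := fun t => Real.sqrt (triW t) with hswdef
    have hsw2 : ∀ t, sw t ^ 2 = triW t := fun t => Real.sq_sqrt (triW_nonneg t)
    have I1 : Integrable (fun t => triW t) :=
      triW_continuous.integrable_of_hasCompactSupport triW_hasCompactSupport
    have I2 : Integrable (fun t => triW t * u t) := htw.mul_integrable hu_cont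
    have I2' : Integrable (fun t => triW t * (-u) t) := by
      have := htw.mul_integrable hu_cont.neg
      exact this
    have I3 : Integrable (fun t => triW t * u t ^ 2) := htw.mul_integrable (hu_cont.pow 2)
    have hX0 : 0 ≤ ∫ t, triW t * u t ^ 2 :=
      integral_nonneg fun t => mul_nonneg (triW_nonneg t) (sq_nonneg _)
    have hcs : ∀ v : ℝ → ℝ, Continuous v → Integrable (fun t => triW t * v t) →
        Integrable (fun t => triW t * v t ^ 2) →
        (∫ t, triW t * v t) ≤ Real.sqrt (∫ t, triW t * v t ^ 2) := by
      intro v hv hI2 hI3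
      have key := cs_integral sw (fun t => sw t * v t)
        (I1.congr (Filter.Eventually.of_forall fun t => (hsw2 t).symm))
        (hI3.congr (Filter.Eventually.of_forall fun t => by
          show triW t * v t ^ 2 = (sw t * v t) ^ 2
          rw [mul_pow, hsw2]))
        (hI2.congr (Filter.Eventually.of_forall fun t => by
          show triW t * v t = sw t * (sw t * v t)
          rw [← mul_assoc, ← sq, hsw2]))
      have e1 : (∫ t, sw t * (sw t * v t)) = ∫ t, triW t * v t := by
        apply integral_congr_ae (Filter.Eventually.of_forall fun t => ?_)
        rw [← mul_assoc, ← sq, hsw2]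
      have e2 : (∫ t, sw t ^ 2) = 1 := by
        rw [integral_congr_ae (Filter.Eventually.of_forall hsw2), triW_integral]
      have e3 : (∫ t, (sw t * v t) ^ 2) = ∫ t, triW t * v t ^ 2 := by
        apply integral_congr_ae (Filter.Eventually.of_forall fun t => ?_)
        rw [mul_pow, hsw2]
      rw [e1, e2, e3] at key
      simpa using key
    have hup := hcs u hu_cont I2 I3
    have hdown := hcs (-u) hu_cont.neg I2' (by
      apply I3.congr (Filter.Eventually.of_forall fun t => ?_)
      show triW t * u t ^ 2 = triW t * (-u) t ^ 2
      simp)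
    have e4 : (∫ t, triW t * (-u) t) = -∫ t, triW t * u t := by
      rw [← integral_neg]
      apply integral_congr_ae (Filter.Eventually.of_forall fun t => ?_)
      simp
    have e5 : (∫ t, triW t * (-u) t ^ 2) = ∫ t, triW t * u t ^ 2 := by
      apply integral_congr_ae (Filter.Eventually.of_forall fun t => ?_)
      simp
    rw [e4, e5] at hdown
    have habs : (∫ t, triW t * u t) ^ 2 ≤ Real.sqrt (∫ t, triW t * u t ^ 2) ^ 2 := by
      apply sq_le_sq' (by linarith) hup
    calc (∫ t, triW t * u t) ^ 2 ≤ Real.sqrt (∫ t, triW t * u t ^ 2) ^ 2 := habs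
      _ = ∫ t, triW t * u t ^ 2 := Real.sq_sqrt hX0
      _ = ∫ t, F x t := rfl
  have hsd := secondDiff_CCS h hh φ ((hφ.of_le ((by simp) : (0:WithTop ℕ∞) ≤ ((⊤ : ℕ∞) : WithTop ℕ∞))).continuous) hφc
  have hmono : (∫ x, secondDiff h φ x ^ 2) ≤ ∫ x, ∫ t, F x t :=
    integral_mono hsd.sq_integrable hmarg hpt
  have hinner : ∀ t, (∫ x, F x t) = triW t * C := by
    intro t
    show (∫ x, triW t * f2 (x + t * h) ^ 2) = triW t * C
    rw [integral_const_mul _ _, integral_add_right_eq_self (fun x => f2 x ^ 2) (t * h)]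
  have hfinal : (∫ x, ∫ t, F x t) = C := by
    rw [hswap, integral_congr_ae (Filter.Eventually.of_forall hinner),
      integral_mul_const _ _, triW_integral, one_mul]
  unfold L2norm
  apply Real.sqrt_le_sqrt
  rw [← hCdef] at *
  linarith

lemma levyCell_measurable (h : ℝ) (k : ℤ) : MeasurableSet (levyCell h k) := by
  unfold levyCell; split <;> [exact measurableSet_Ioc; exact measurableSet_Ico]

lemma zetah_nonneg (ν : Measure ℝ) (h : ℝ) (k : ℤ) : 0 ≤ zetah ν h k :=
  setIntegral_nonneg (levyCell_measurable h k) (fun z _ => sq_nonneg z)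

lemma thetaW_nonneg (k : ℤ) (l : ℕ) (hk : k ≠ 0) (hl : l < k.natAbs) : 0 ≤ thetaW k l := by
  have hm : (1 : ℝ) ≤ (k.natAbs : ℝ) := by
    have : 1 ≤ k.natAbs := Nat.one_le_iff_ne_zero.mpr (Int.natAbs_ne_zero.mpr hk)
    exact_mod_cast this
  have hm0 : (0 : ℝ) < (k.natAbs : ℝ) := by linarith
  apply intervalIntegral.integral_nonneg
  · gcongr
    linarith
  · intro u hu
    have hub : u ≤ ((l : ℝ) + 1) / (k.natAbs : ℝ) := hu.2
    have : ((l : ℝ) + 1) / (k.natAbs : ℝ) ≤ 1 := by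
      rw [div_le_one hm0]
      have : (l : ℝ) + 1 ≤ (k.natAbs : ℝ) := by exact_mod_cast hl
      linarith
    linarith
  
lemma thetaW_sum (k : ℤ) (hk : k ≠ 0) :
    (∑ l ∈ Finset.range k.natAbs, thetaW k l) = 1 / 2 := by
  have hm : 1 ≤ k.natAbs := Nat.one_le_iff_ne_zero.mpr (Int.natAbs_ne_zero.mpr hk)
  have hm0 : (0 : ℝ) < (k.natAbs : ℝ) := by exact_mod_cast hm
  have key := intervalIntegral.sum_integral_adjacent_intervals
    (a := fun i : ℕ => (i : ℝ) / (k.natAbs : ℝ)) (n := k.natAbs)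
    (f := fun θ => 1 - θ) (μ := volume)
    (fun i _ => (continuous_const.sub continuous_id).intervalIntegrable _ _)
  have he : ∀ l ∈ Finset.range k.natAbs, thetaW k l
      = ∫ θ in ((l : ℝ) / (k.natAbs : ℝ))..(((l + 1 : ℕ) : ℝ) / (k.natAbs : ℝ)), (1 - θ) := by
    intro l _
    unfold thetaW
    norm_num
  rw [Finset.sum_congr rfl he, key]
  norm_num
  rw [div_self (abs_pos.mpr (Int.cast_ne_zero.mpr hk)).ne']
  rw [intervalIntegral.integral_sub intervalIntegrable_const
    intervalIntegral.intervalIntegrable_id, integral_id, intervalIntegral.integral_const]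
  norm_num

lemma levyCell_subset (n : ℕ) (hn : 0 < n) (k : ℤ) (hk : k ≠ 0)
    (hkl : -(n : ℤ) ≤ k) (hku : k ≤ (n : ℤ)) :
    levyCell (1 / n) k ⊆ {z : ℝ | z ≠ 0 ∧ |z| ≤ 1} := by
  have hn0 : (0 : ℝ) < (n : ℝ) := by exact_mod_cast hn
  have hh : (0 : ℝ) < 1 / n := by positivity
  intro z hz
  unfold levyCell at hz
  split at hz
  · rename_i hkpos
    have h1 : (1 : ℝ) ≤ (k : ℝ) := by exact_mod_cast hkpos
    have hub : (k : ℝ) * (1 / n) ≤ 1 := by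
      have : (k : ℝ) ≤ (n : ℝ) := by exact_mod_cast hku
      rw [mul_one_div, div_le_one hn0]
      exact this
    have hzpos : 0 < z := lt_of_le_of_lt (by nlinarith : (0:ℝ) ≤ ((k:ℝ) - 1) * (1/n)) hz.1
    exact ⟨ne_of_gt hzpos, by rw [abs_of_pos hzpos]; exact hz.2.trans hub⟩
  · rename_i hkpos
    have hkneg : k < 0 := lt_of_le_of_ne (not_lt.mp hkpos) hk
    have h1 : (k : ℝ) + 1 ≤ 0 := by
      have : k + 1 ≤ 0 := by omega
      exact_mod_cast this
    have hlb : (-1 : ℝ) ≤ (k : ℝ) * (1 / n) := by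
      have h2 : (-(n:ℝ)) ≤ (k : ℝ) := by exact_mod_cast hkl
      have h3 : (n:ℝ) * (1/n) = 1 := by field_simp
      nlinarith
    have hzneg : z < 0 := lt_of_lt_of_le hz.2 (by nlinarith : ((k:ℝ) + 1) * (1/n) ≤ 0)
    refine ⟨ne_of_lt hzneg, ?_⟩
    rw [abs_of_neg hzneg]
    linarith [hz.1]

lemma levyCell_disjoint (h : ℝ) (hh : 0 < h) (j k : ℤ) (hj : j ≠ 0) (hk : k ≠ 0)
    (hjk : j ≠ k) : Disjoint (levyCell h j) (levyCell h k) := by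
  rw [Set.disjoint_left]
  intro z hzj hzk
  unfold levyCell at hzj hzk
  have key : ∀ a b : ℤ, a < b → 0 < a → ¬(z ≤ (a:ℝ) * h ∧ ((b:ℝ) - 1) * h < z) := by
    intro a b hab ha ⟨h1, h2⟩
    have : (a : ℝ) ≤ (b : ℝ) - 1 := by
      have h' : (a : ℝ) + 1 ≤ (b : ℝ) := by exact_mod_cast (by omega : a + 1 ≤ b)
      linarith
    nlinarith
  have keyn : ∀ a b : ℤ, a < b → b < 0 → ¬(z < ((a:ℝ) + 1) * h ∧ (b:ℝ) * h ≤ z) := by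
    intro a b hab hb ⟨h1, h2⟩
    have : (a : ℝ) + 1 ≤ (b : ℝ) := by
      have : a + 1 ≤ b := by omega
      exact_mod_cast this
    nlinarith
  split at hzj <;> split at hzk
  · rename_i hjp hkp
    rcases lt_or_gt_of_ne hjk with hlt | hgt
    · exact key j k hlt hjp ⟨hzj.2, hzk.1⟩
    · exact key k j hgt hkp ⟨hzk.2, hzj.1⟩
  · rename_i hjp hkp
    have hkneg : k < 0 := lt_of_le_of_ne (not_lt.mp hkp) hk
    have hj1 : (1:ℝ) ≤ (j:ℝ) := by exact_mod_cast hjp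
    have h1 : 0 < z := lt_of_le_of_lt (by nlinarith : (0:ℝ) ≤ ((j:ℝ) - 1) * h) hzj.1
    have h2 : z < 0 := lt_of_lt_of_le hzk.2 (by
      have : (k : ℝ) + 1 ≤ 0 := by exact_mod_cast (by omega : k + 1 ≤ 0)
      nlinarith)
    linarith
  · rename_i hjp hkp
    have hjneg : j < 0 := lt_of_le_of_ne (not_lt.mp hjp) hj
    have hk1 : (1:ℝ) ≤ (k:ℝ) := by exact_mod_cast hkp
    have h1 : 0 < z := lt_of_le_of_lt (by nlinarith : (0:ℝ) ≤ ((k:ℝ) - 1) * h) hzk.1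
    have h2 : z < 0 := lt_of_lt_of_le hzj.2 (by
      have : (j : ℝ) + 1 ≤ 0 := by exact_mod_cast (by omega : j + 1 ≤ 0)
      nlinarith)
    linarith
  · rename_i hjp hkp
    have hjneg : j < 0 := lt_of_le_of_ne (not_lt.mp hjp) hj
    have hkneg : k < 0 := lt_of_le_of_ne (not_lt.mp hkp) hk
    rcases lt_or_gt_of_ne hjk with hlt | hgt
    · exact keyn j k hlt hkneg ⟨hzj.2, hzk.1⟩
    · exact keyn k j hgt hjneg ⟨hzk.2, hzj.1⟩

lemma muA_measurable : MeasurableSet {z : ℝ | z ≠ 0 ∧ |z| ≤ 1} := by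
  have : {z : ℝ | z ≠ 0 ∧ |z| ≤ 1} = ({0}ᶜ : Set ℝ) ∩ {z : ℝ | |z| ≤ 1} := by
    ext z; simp [Set.mem_setOf_eq, and_comm]
  rw [this]
  exact ((measurableSet_singleton 0).compl).inter
    (measurableSet_le (by measurability) measurable_const)

lemma muA_integrable (ν : Measure ℝ)
    (hνint : ∫⁻ z, ENNReal.ofReal (min 1 (z ^ 2)) ∂ν < ⊤) :
    IntegrableOn (fun z : ℝ => z ^ 2) {z : ℝ | z ≠ 0 ∧ |z| ≤ 1} ν := by
  set A := {z : ℝ | z ≠ 0 ∧ |z| ≤ 1} with hA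
  constructor
  · exact (continuous_pow 2).aestronglyMeasurable
  · rw [hasFiniteIntegral_iff_ofReal (Filter.Eventually.of_forall fun z => sq_nonneg z)]
    have hle : (∫⁻ z in A, ENNReal.ofReal (z ^ 2) ∂ν)
        ≤ ∫⁻ z, ENNReal.ofReal (min 1 (z ^ 2)) ∂ν := by
      have he : (∫⁻ z in A, ENNReal.ofReal (z ^ 2) ∂ν)
          = ∫⁻ z in A, ENNReal.ofReal (min 1 (z ^ 2)) ∂ν := by
        apply setLIntegral_congr_fun muA_measurable
        intro z hz
        have : z ^ 2 ≤ 1 := by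
          have := hz.2
          have h2 : z^2 = |z|^2 := (sq_abs z).symm
          nlinarith [abs_nonneg z]
        simp only [min_eq_right this]
      rw [he]
      exact setLIntegral_le_lintegral _ _
    exact lt_of_le_of_lt hle hνint

lemma zetah_sum_le (ν : Measure ℝ)
    (hνint : ∫⁻ z, ENNReal.ofReal (min 1 (z ^ 2)) ∂ν < ⊤) (n : ℕ) (hn : 0 < n) :
    (∑ k ∈ (Finset.Icc (-(n : ℤ)) (n : ℤ)).erase 0, zetah ν (1 / n) k)
      ≤ ∫ z in {z : ℝ | z ≠ 0 ∧ |z| ≤ 1}, z ^ 2 ∂ν := by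
  set S := (Finset.Icc (-(n : ℤ)) (n : ℤ)).erase 0 with hS
  have hIntA := muA_integrable ν hνint
  have hsub : ∀ k ∈ S, levyCell (1 / n) k ⊆ {z : ℝ | z ≠ 0 ∧ |z| ≤ 1} := by
    intro k hk
    rw [hS, Finset.mem_erase, Finset.mem_Icc] at hk
    exact levyCell_subset n hn k hk.1 hk.2.1 hk.2.2
  have hh : (0 : ℝ) < 1 / n := by positivity
  have hbi := integral_biUnion_finset (μ := ν) (f := fun z : ℝ => z ^ 2) S
    (fun k _ => levyCell_measurable _ k)
    (fun j hj k hk hjk => levyCell_disjoint _ hh j k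
      (Finset.ne_of_mem_erase hj) (Finset.ne_of_mem_erase hk) hjk)
    (fun k hk => hIntA.mono_set (hsub k hk))
  beta_reduce at hbi
  simp only [zetah]
  rw [← hbi]
  apply setIntegral_mono_set hIntA
    (Filter.Eventually.of_forall fun z => sq_nonneg z)
  apply Filter.Eventually.of_forall
  exact Set.iUnion₂_subset hsub

/-- Boundedness of `J_1^h`: `‖J_1^hφ‖_{L²} ≤ (μ₂/2) ‖φ″‖_{L²}` with
`μ₂ = ∫_{0<|z|≤1} z² ν(dz)` and `h = 1/n`. -/
theorem J1h_bound
    (ν : Measure ℝ) (hν0 : ν {0} = 0)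
    (hνint : ∫⁻ z, ENNReal.ofReal (min 1 (z ^ 2)) ∂ν < ⊤)
    (n : ℕ) (hn : 0 < n)
    (φ : ℝ → ℝ) (hφ : ContDiff ℝ (⊤ : ℕ∞) φ) (hφc : HasCompactSupport φ) :
    L2norm (J1h ν n φ)
      ≤ ((∫ z in {z : ℝ | z ≠ 0 ∧ |z| ≤ 1}, z ^ 2 ∂ν) / 2) * L2norm (iteratedDeriv 2 φ) := by
  classical
  have hn0 : (0:ℝ) < n := by exact_mod_cast hn
  have hh : (0:ℝ) < 1 / n := by positivity
  set S := (Finset.Icc (-(n : ℤ)) (n : ℤ)).erase 0 with hS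
  set D := secondDiff (1 / (n:ℝ)) φ with hD
  have hφcont : Continuous φ := (hφ.of_le ((by simp) : (0:WithTop ℕ∞) ≤ ((⊤ : ℕ∞) : WithTop ℕ∞))).continuous
  have hsd : CCS D := secondDiff_CCS _ hh φ hφcont hφc
  have hDle : L2norm D ≤ L2norm (iteratedDeriv 2 φ) := L2norm_secondDiff_le _ hh φ hφ hφc
  have hL2f : 0 ≤ L2norm (iteratedDeriv 2 φ) := L2norm_nonneg _
  set F : ℤ → ℝ → ℝ := fun k x => zetah ν (1 / n) k *
      ∑ l ∈ Finset.range k.natAbs, thetaW k l * D (x + sgn k * (l : ℝ) * (1 / n)) with hF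
  have hFccs : ∀ k ∈ S, CCS (F k) := by
    intro k _
    exact (CCS.sum (Finset.range k.natAbs)
      (fun l x => thetaW k l * D (x + sgn k * (l : ℝ) * (1 / n)))
      (fun l _ => (hsd.translate _).const_mul _)).const_mul _
  have hJ : J1h ν n φ = fun x => ∑ k ∈ S, F k x := rfl
  have hmain : L2norm (J1h ν n φ) ≤ ∑ k ∈ S, L2norm (F k) := by
    rw [hJ]; exact L2norm_sum_le S F hFccs
  have hper : ∀ k ∈ S, L2norm (F k)
      ≤ zetah ν (1 / n) k * (1 / 2 * L2norm (iteratedDeriv 2 φ)) := by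
    intro k hk
    have hk0 : k ≠ 0 := Finset.ne_of_mem_erase hk
    have e1 : L2norm (F k) = |zetah ν (1 / n) k| *
        L2norm (fun x => ∑ l ∈ Finset.range k.natAbs,
          thetaW k l * D (x + sgn k * (l : ℝ) * (1 / n))) := L2norm_const_mul _ _
    rw [e1, abs_of_nonneg (zetah_nonneg ν _ k)]
    apply mul_le_mul_of_nonneg_left ?_ (zetah_nonneg ν _ k)
    have h2 : L2norm (fun x => ∑ l ∈ Finset.range k.natAbs,
          thetaW k l * D (x + sgn k * (l : ℝ) * (1 / n)))
        ≤ ∑ l ∈ Finset.range k.natAbs,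
          L2norm (fun x => thetaW k l * D (x + sgn k * (l : ℝ) * (1 / n))) :=
      L2norm_sum_le _ _ (fun l _ => (hsd.translate _).const_mul _)
    have h3 : ∀ l ∈ Finset.range k.natAbs,
        L2norm (fun x => thetaW k l * D (x + sgn k * (l : ℝ) * (1 / n)))
          = thetaW k l * L2norm D := by
      intro l hl
      rw [L2norm_const_mul, L2norm_translate,
        abs_of_nonneg (thetaW_nonneg k l hk0 (Finset.mem_range.mp hl))]
    calc L2norm (fun x => ∑ l ∈ Finset.range k.natAbs,
          thetaW k l * D (x + sgn k * (l : ℝ) * (1 / n)))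
        ≤ ∑ l ∈ Finset.range k.natAbs,
          L2norm (fun x => thetaW k l * D (x + sgn k * (l : ℝ) * (1 / n))) := h2
      _ = ∑ l ∈ Finset.range k.natAbs, thetaW k l * L2norm D :=
          Finset.sum_congr rfl h3
      _ = (∑ l ∈ Finset.range k.natAbs, thetaW k l) * L2norm D :=
          (Finset.sum_mul _ _ _).symm
      _ = 1 / 2 * L2norm D := by rw [thetaW_sum k hk0]
      _ ≤ 1 / 2 * L2norm (iteratedDeriv 2 φ) := by linarith
  have hsum : (∑ k ∈ S, L2norm (F k))
      ≤ (∑ k ∈ S, zetah ν (1 / n) k) * (1 / 2 * L2norm (iteratedDeriv 2 φ)) := by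
    rw [Finset.sum_mul]
    exact Finset.sum_le_sum hper
  have hzeta := zetah_sum_le ν hνint n hn
  calc L2norm (J1h ν n φ) ≤ ∑ k ∈ S, L2norm (F k) := hmain
    _ ≤ (∑ k ∈ S, zetah ν (1 / n) k) * (1 / 2 * L2norm (iteratedDeriv 2 φ)) := hsum
    _ ≤ (∫ z in {z : ℝ | z ≠ 0 ∧ |z| ≤ 1}, z ^ 2 ∂ν)
        * (1 / 2 * L2norm (iteratedDeriv 2 φ)) := by
      apply mul_le_mul_of_nonneg_right hzeta (by positivity)
    _ = (∫ z in {z : ℝ | z ≠ 0 ∧ |z| ≤ 1}, z ^ 2 ∂ν) / 2 * L2norm (iteratedDeriv 2 φ) := by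
      ring
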